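/- arXiv:2305.04932 — 4 statements merged into one kernel-verified Lean document; each statement's English description precedes it below -/
import Mathlib

section
/- A real n×n matrix A satisfies S_A² = S_A (the Stein operator is idempotent) if and only if A² = A or A² = −A. -/
open Matrix

private lemma stein_outer {n : ℕ} (A : Matrix (Fin n) (Fin n) ℝ) (v : Fin n → ℝ) :
    A * vecMulVec v v * Aᵀ = vecMulVec (A.mulVec v) (A.mulVec v) := by
  ext i j
  simp only [mul_apply, vecMulVec_apply, mulVec, dotProduct, transpose_apply,
    Finset.sum_mul, Finset.mul_sum]
  apply Finset.sum_congr rfl; intro l _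
  apply Finset.sum_congr rfl; intro k _
  ring

private lemma stein_sign {n : ℕ} (x y : Fin n → ℝ) (h : ∀ i j, y i * y j = x i * x j) :
    y = x ∨ y = -x := by
  by_cases hx : x = 0
  · left
    funext i
    have := h i i
    rw [hx] at this
    simp at this
    simp [hx, this]
  · obtain ⟨i0, hi0⟩ : ∃ i, x i ≠ 0 := by
      by_contra hc; push_neg at hc; exact hx (funext hc)
    have h0 := h i0 i0
    rcases mul_self_eq_mul_self_iff.mp h0 with hy | hy
    · left; funext j
      have := h i0 j
      rw [hy] at this
      exact mul_left_cancel₀ hi0 this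
    · right; funext j
      have := h i0 j
      rw [hy] at this
      have h2 : x i0 * (-(y j)) = x i0 * x j := by linarith [this]
      have := mul_left_cancel₀ hi0 h2
      simp [← this]

/-- The Stein operator `S_A(X) = X − AXAᵀ` is idempotent on symmetric matrices
iff `A² = A` or `A² = −A`. -/
theorem stein_idempotent_iff {n : ℕ} (A : Matrix (Fin n) (Fin n) ℝ) :
    (∀ X : Matrix (Fin n) (Fin n) ℝ, Xᵀ = X →
        (X - A * X * Aᵀ) - A * (X - A * X * Aᵀ) * Aᵀ = X - A * X * Aᵀ) ↔
      (A * A = A ∨ A * A = -A) := by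
  have hexp : ∀ X : Matrix (Fin n) (Fin n) ℝ,
      A * (A * X * Aᵀ) * Aᵀ = (A * A) * X * (A * A)ᵀ := by
    intro X; rw [transpose_mul]; noncomm_ring
  constructor
  · intro h
    -- key pointwise fact
    have key : ∀ v : Fin n → ℝ,
        (A * A).mulVec v = A.mulVec v ∨ (A * A).mulVec v = -(A.mulVec v) := by
      intro v
      have hsym : (vecMulVec v v)ᵀ = vecMulVec v v := by
        ext i j; simp [vecMulVec_apply, mul_comm]
      have hm := h (vecMulVec v v) hsym
      have h0 : A * (vecMulVec v v - A * vecMulVec v v * Aᵀ) * Aᵀ = 0 :=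
        sub_eq_self.mp hm
      rw [mul_sub, sub_mul, sub_eq_zero] at h0
      rw [hexp] at h0
      rw [stein_outer A v, stein_outer (A * A) v] at h0
      have hij : ∀ i j, (A * A).mulVec v i * (A * A).mulVec v j =
          A.mulVec v i * A.mulVec v j := by
        intro i j
        have := congrFun (congrFun h0 i) j
        simpa [vecMulVec_apply] using this.symm
      have := stein_sign (A.mulVec v) ((A * A).mulVec v) hij
      simpa using this
    by_cases hc : ∀ v : Fin n → ℝ, (A * A).mulVec v = A.mulVec v
    · left
      ext i j
      have := congrFun (hc (Pi.single j 1)) i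
      simpa using this
    · right
      push_neg at hc
      obtain ⟨v, hv⟩ := hc
      have hvneg : (A * A).mulVec v = -(A.mulVec v) := (key v).resolve_left hv
      have hall : ∀ w : Fin n → ℝ, (A * A).mulVec w = -(A.mulVec w) := by
        intro w
        rcases key w with hw | hw
        · -- A²w = Aw; use v + w to force Aw = 0
          rcases key (v + w) with hvw | hvw
          · exfalso
            rw [mulVec_add, mulVec_add, hvneg, hw] at hvw
            have hAv : A.mulVec v = 0 := by
              have : (2 : ℝ) • A.mulVec v = 0 := by
                funext i
                have := congrFun hvw i
                simp only [Pi.add_apply, Pi.neg_apply, Pi.smul_apply, smul_eq_mul,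
                  Pi.zero_apply] at this ⊢
                linarith
              simpa using this
            apply hv
            rw [hvneg, hAv]
            simp
          · rw [mulVec_add, mulVec_add, hvneg, hw, neg_add] at hvw
            have hAw : A.mulVec w = 0 := by
              have : (2 : ℝ) • A.mulVec w = 0 := by
                funext i
                have := congrFun hvw i
                simp only [Pi.add_apply, Pi.neg_apply, Pi.smul_apply, smul_eq_mul,
                  Pi.zero_apply] at this ⊢
                linarith
              simpa using this
            rw [hw, hAw]; simp
        · exact hw
      ext i j
      have := congrFun (hall (Pi.single j 1)) i
      simpa using this
  · rintro (hA | hA) <;> intro X _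
    · rw [sub_eq_self, mul_sub, sub_mul, sub_eq_zero, hexp, hA]
    · rw [sub_eq_self, mul_sub, sub_mul, sub_eq_zero, hexp, hA, transpose_neg]
      noncomm_ring
end

section
/- Let A be a real n×n matrix with A² = −I. If X is a symmetric matrix in the range of the Stein operator S_A and S_A(X) is positive semidefinite, then X = 0. -/
open Matrix

/-! If `A² = -1`, then `S_A² = 2 S_A`, i.e. `S_A` acts as `2` on its range, so `A X Aᵀ = -X` for
every `X` in the range. Then `S_A(X) = 2X ⪰ 0` gives `X ⪰ 0`, hence also `-X = A X Aᵀ ⪰ 0`, and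
antisymmetry of the Loewner order forces `X = 0`. -/

theorem mul_sub_mul_mul_mul_eq_neg {R : Type*} [Ring R] {a b : R} (ha : a * a = -1)
    (hb : b * b = -1) (y : R) : a * (y - a * y * b) * b = -(y - a * y * b) :=
  calc a * (y - a * y * b) * b = a * y * b - (a * a) * y * (b * b) := by noncomm_ring
    _ = -(y - a * y * b) := by rw [ha, hb]; noncomm_ring

open scoped MatrixOrder in
theorem stein_trivially_range_monotone_of_sq_eq_neg_one_general {n : ℕ}
    (A : Matrix (Fin n) (Fin n) ℝ) (hA : A * A = -1)
    (X : Matrix (Fin n) (Fin n) ℝ)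
    (hrange : ∃ Y : Matrix (Fin n) (Fin n) ℝ, Yᵀ = Y ∧ Y - A * Y * Aᵀ = X)
    (hpsd : (X - A * X * Aᵀ).PosSemidef) : X = 0 := by
  obtain ⟨Y, -, hYX⟩ := hrange
  have hAt : Aᵀ * Aᵀ = -1 := by rw [← transpose_mul, hA, transpose_neg, transpose_one]
  have hneg : A * X * Aᵀ = -X := hYX ▸ mul_sub_mul_mul_mul_eq_neg hA hAt Y
  rw [hneg, sub_neg_eq_add, ← two_smul ℝ] at hpsd
  have hX : X.PosSemidef := by
    simpa using hpsd.smul (inv_nonneg.2 (zero_le_two : (0 : ℝ) ≤ 2))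
  have hnegX : (-X).PosSemidef := by
    simpa [hneg] using hX.mul_mul_conjTranspose_same A
  exact le_antisymm (neg_nonneg.1 hnegX.nonneg) hX.nonneg

/-- If `A² = −I`, the Stein operator `S_A(X) = X − AXAᵀ` is trivially range
monotone: `X` symmetric, `X ∈ R(S_A)` and `S_A(X) ⪰ 0` imply `X = 0`. -/
theorem stein_trivially_range_monotone_of_sq_eq_neg_one {n : ℕ}
    (A : Matrix (Fin n) (Fin n) ℝ) (hA : A * A = -1)
    (X : Matrix (Fin n) (Fin n) ℝ) (hX : Xᵀ = X)
    (hrange : ∃ Y : Matrix (Fin n) (Fin n) ℝ, Yᵀ = Y ∧ Y - A * Y * Aᵀ = X)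
    (hpsd : (X - A * X * Aᵀ).PosSemidef) : X = 0 :=
  stein_trivially_range_monotone_of_sq_eq_neg_one_general A hA X hrange hpsd
end

section
/- Let A be a real n×n matrix with A² = I. If X is a symmetric matrix in the range of the Stein operator S_A and S_A(X) is positive semidefinite, then X = 0. -/
/-!
Write `X = S_A(Y)`. Since `A² = I`, conjugation by `A` is an involution, so `A X Aᵀ = A Y Aᵀ - Y = -X`
and hence `S_A(X) = 2X`. Thus `X ⪰ 0`, and `-X = A X Aᵀ ⪰ 0` as a congruence of `X`, forcing `X = 0`.
-/

open Matrix

namespace Matrix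

variable {n R : Type*} [Fintype n] [DecidableEq n] [CommRing R]

def stein (A X : Matrix n n R) : Matrix n n R := X - A * X * Aᵀ

theorem mul_stein_mul_transpose_of_mul_self_eq_one {A : Matrix n n R} (hA : A * A = 1)
    (Y : Matrix n n R) : A * stein A Y * Aᵀ = -stein A Y := by
  have hAY : A * (A * Y * Aᵀ) * Aᵀ = Y := by
    rw [← Matrix.mul_assoc, ← Matrix.mul_assoc, hA, Matrix.one_mul, Matrix.mul_assoc,
      ← transpose_mul, hA, transpose_one, Matrix.mul_one]
  rw [stein, Matrix.mul_sub, Matrix.sub_mul, hAY, neg_sub]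

theorem stein_stein_of_mul_self_eq_one {A : Matrix n n R} (hA : A * A = 1) (Y : Matrix n n R) :
    stein A (stein A Y) = (2 : R) • stein A Y := by
  rw [stein, mul_stein_mul_transpose_of_mul_self_eq_one hA, sub_neg_eq_add, two_smul]

end Matrix

open scoped ComplexOrder MatrixOrder in
theorem Matrix.PosSemidef.eq_zero_of_neg {n 𝕜 : Type*} [Fintype n] [RCLike 𝕜]
    {X : Matrix n n 𝕜} (hX : X.PosSemidef) (hnegX : (-X).PosSemidef) : X = 0 :=
  le_antisymm (by rwa [le_iff, zero_sub]) hX.nonneg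

theorem stein_trivially_range_monotone_of_sq_eq_one_general {n : ℕ}
    (A : Matrix (Fin n) (Fin n) ℝ) (hA : A * A = 1)
    (X : Matrix (Fin n) (Fin n) ℝ)
    (hrange : ∃ Y : Matrix (Fin n) (Fin n) ℝ, Yᵀ = Y ∧ Y - A * Y * Aᵀ = X)
    (hpsd : (X - A * X * Aᵀ).PosSemidef) : X = 0 := by
  obtain ⟨Y, -, rfl⟩ := hrange
  change (stein A (stein A Y)).PosSemidef at hpsd
  rw [stein_stein_of_mul_self_eq_one hA] at hpsd
  have hX : (stein A Y).PosSemidef := by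
    simpa [smul_smul] using hpsd.smul (a := (2⁻¹ : ℝ)) (by norm_num)
  have hnegX : (-stein A Y).PosSemidef := by
    rw [← mul_stein_mul_transpose_of_mul_self_eq_one hA]
    simpa using hX.mul_mul_conjTranspose_same A
  exact hX.eq_zero_of_neg hnegX

/-- If `A² = I`, the Stein operator `S_A(X) = X − AXAᵀ` is trivially range
monotone: `X` symmetric, `X ∈ R(S_A)` and `S_A(X) ⪰ 0` imply `X = 0`. -/
theorem stein_trivially_range_monotone_of_sq_eq_one {n : ℕ}
    (A : Matrix (Fin n) (Fin n) ℝ) (hA : A * A = 1)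
    (X : Matrix (Fin n) (Fin n) ℝ) (hX : Xᵀ = X)
    (hrange : ∃ Y : Matrix (Fin n) (Fin n) ℝ, Yᵀ = Y ∧ Y - A * Y * Aᵀ = X)
    (hpsd : (X - A * X * Aᵀ).PosSemidef) : X = 0 :=
  stein_trivially_range_monotone_of_sq_eq_one_general A hA X hrange hpsd
end

section
/- Let A be a real n×n matrix with A² = −I. If X is a symmetric matrix in the range of the Lyapunov operator L_A(X) = AX + XAᵀ and L_A(X) is positive semidefinite, then X = 0. -/
/-!
Conjugation `W ↦ A W Aᵀ` negates every value of `L_A`, since `A² = -1`. Hence `Z = L_A(X)` and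
`A Z Aᵀ = -Z` are both positive semidefinite, so `Z = 0`. Then `X Aᵀ = -A X` gives `A X Aᵀ = X`,
while `X ∈ R(L_A)` gives `A X Aᵀ = -X`; so `X = 0`.
-/

open Matrix

open scoped ComplexOrder

section Lyapunov

variable {ι R : Type*} [Fintype ι] [DecidableEq ι] [CommRing R] {A : Matrix ι ι R}

theorem transpose_mul_transpose_eq_neg_one (hA : A * A = -1) : Aᵀ * Aᵀ = -1 := by
  rw [← transpose_mul, hA, transpose_neg, transpose_one]

theorem mul_lyapunov_mul_transpose_of_mul_self_eq_neg_one (hA : A * A = -1)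
    (W : Matrix ι ι R) : A * (A * W + W * Aᵀ) * Aᵀ = -(A * W + W * Aᵀ) := by
  have hAT := transpose_mul_transpose_eq_neg_one hA
  calc A * (A * W + W * Aᵀ) * Aᵀ = (A * A) * W * Aᵀ + A * W * (Aᵀ * Aᵀ) := by noncomm_ring
    _ = -(A * W + W * Aᵀ) := by rw [hA, hAT]; noncomm_ring

theorem mul_mul_transpose_eq_self_of_lyapunov_eq_zero (hA : A * A = -1) {X : Matrix ι ι R}
    (hX : A * X + X * Aᵀ = 0) : A * X * Aᵀ = X := by
  rw [Matrix.mul_assoc, eq_neg_of_add_eq_zero_right hX, Matrix.mul_neg, ← Matrix.mul_assoc, hA,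
    neg_one_mul, neg_neg]

end Lyapunov

theorem Matrix.PosSemidef.eq_zero_of_mul_mul_conjTranspose_eq_neg {ι 𝕜 : Type*} [Fintype ι]
    [RCLike 𝕜] {Z : Matrix ι ι 𝕜} (hZ : Z.PosSemidef) (B : Matrix ι ι 𝕜)
    (hB : B * Z * Bᴴ = -Z) : Z = 0 := by
  open scoped MatrixOrder in
  have hneg : Z ≤ 0 := by
    rw [le_iff, zero_sub, ← hB]
    exact hZ.mul_mul_conjTranspose_same B
  exact le_antisymm hneg hZ.nonneg

theorem lyapunov_trivially_range_monotone_of_sq_eq_neg_one_general {n : ℕ}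
    (A : Matrix (Fin n) (Fin n) ℝ) (hA : A * A = -1)
    (X : Matrix (Fin n) (Fin n) ℝ)
    (hrange : ∃ Y : Matrix (Fin n) (Fin n) ℝ, Yᵀ = Y ∧ A * Y + Y * Aᵀ = X)
    (hpsd : (A * X + X * Aᵀ).PosSemidef) : X = 0 := by
  obtain ⟨Y, -, hYX⟩ := hrange
  have hLX : A * X + X * Aᵀ = 0 := by
    refine hpsd.eq_zero_of_mul_mul_conjTranspose_eq_neg A ?_
    rw [conjTranspose_eq_transpose_of_trivial]
    exact mul_lyapunov_mul_transpose_of_mul_self_eq_neg_one hA X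
  have hneg : A * X * Aᵀ = -X := hYX ▸ mul_lyapunov_mul_transpose_of_mul_self_eq_neg_one hA Y
  have hself : A * X * Aᵀ = X := mul_mul_transpose_eq_self_of_lyapunov_eq_zero hA hLX
  ext i j
  exact self_eq_neg.mp (congrFun₂ (hself.symm.trans hneg) i j)

/-- If `A² = −I`, the Lyapunov operator `L_A(X) = AX + XAᵀ` is trivially range
monotone: `X` symmetric, `X ∈ R(L_A)` and `L_A(X) ⪰ 0` imply `X = 0`. -/
theorem lyapunov_trivially_range_monotone_of_sq_eq_neg_one {n : ℕ}
    (A : Matrix (Fin n) (Fin n) ℝ) (hA : A * A = -1)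
    (X : Matrix (Fin n) (Fin n) ℝ) (hX : Xᵀ = X)
    (hrange : ∃ Y : Matrix (Fin n) (Fin n) ℝ, Yᵀ = Y ∧ A * Y + Y * Aᵀ = X)
    (hpsd : (A * X + X * Aᵀ).PosSemidef) : X = 0 :=
  lyapunov_trivially_range_monotone_of_sq_eq_neg_one_general A hA X hrange hpsd
end
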